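/- arXiv:2505.03613 — 4 statements merged into one kernel-verified Lean document; each statement's English description precedes it below -/
import Mathlib

section
/- Let p, q be real numbers with 2 < q < p and let A, B, C be positive real numbers with A + B − C < 0. Then there exists t₀ ∈ (0, 1) such that A·t₀² + B·t₀^p − C·t₀^q = 0 and A·t₀² + (p−1)·B·t₀^p − (q−1)·C·t₀^q < 0. -/
/-!
Writing `φ(t) = t² f(t)` with `f(t) = A + B t^(p-2) - C t^(q-2)`, the intermediate value theorem
gives a zero `t₀ ∈ (0,1)` of `f`, since `f(0) = A > 0 > A + B - C = f(1)`. At a zero of `φ` the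
second expression equals `t₀ φ'(t₀)`, so it remains to see that `f` is decreasing there. In the
variable `s = t^(q-2)`, `f` is the convex function `A + B s^r - C s` with `r = (p-2)/(q-2) > 1`;
it vanishes at `s₀ = t₀^(q-2)` and is negative at `s = 1`, so its tangent at `s₀` has negative slope.
-/

open Set

/-- The tangent line of `s ↦ s^(b/a)` at `s = t^a`, evaluated at `s = 1`, lies below the graph. -/
lemma mul_rpow_mul_one_sub_rpow_le {a b t : ℝ} (ha : 0 < a) (hab : a ≤ b) (ht : 0 < t) :
    b * t ^ b * (1 - t ^ a) ≤ a * (1 - t ^ b) * t ^ a := by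
  set r := b / a
  have hr : 1 ≤ r := (one_le_div ha).2 hab
  have hY : 0 < t ^ a := Real.rpow_pos_of_pos ht a
  have hX : 0 < t ^ b := Real.rpow_pos_of_pos ht b
  have hYr : (t ^ a)⁻¹ ^ r = (t ^ b)⁻¹ := by
    rw [Real.inv_rpow hY.le, ← Real.rpow_mul ht.le, mul_div_cancel₀ b ha.ne']
  have bernoulli : 1 + r * ((t ^ a)⁻¹ - 1) ≤ (t ^ b)⁻¹ := by
    have := one_add_mul_self_le_rpow_one_add (by linarith [inv_pos.2 hY] : -1 ≤ (t ^ a)⁻¹ - 1) hr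
    rwa [add_sub_cancel, hYr] at this
  have key : t ^ b * t ^ a * a * (1 + r * ((t ^ a)⁻¹ - 1)) ≤ t ^ a * a := by
    calc t ^ b * t ^ a * a * (1 + r * ((t ^ a)⁻¹ - 1))
        ≤ t ^ b * t ^ a * a * (t ^ b)⁻¹ := by gcongr
      _ = t ^ a * a := by field_simp
  have expand : t ^ b * t ^ a * a * (1 + r * ((t ^ a)⁻¹ - 1))
      = a * t ^ b * t ^ a + b * t ^ b * (1 - t ^ a) := by
    simp only [r]; field_simp
  linarith

lemma exists_mem_Ioo_add_mul_rpow_sub_mul_rpow_eq_zero {a b A B C : ℝ} (ha : 0 < a) (hb : 0 < b)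
    (hA : 0 < A) (h : A + B - C < 0) :
    ∃ t ∈ Ioo (0 : ℝ) 1, A + B * t ^ b - C * t ^ a = 0 := by
  have hcont : ContinuousOn (fun t : ℝ ↦ A + B * t ^ b - C * t ^ a) (Icc 0 1) :=
    fun t _ ↦ (continuousAt_const.add (continuousAt_const.mul
      (Real.continuousAt_rpow_const t b (Or.inr hb.le)))).sub (continuousAt_const.mul
      (Real.continuousAt_rpow_const t a (Or.inr ha.le))) |>.continuousWithinAt
  refine intermediate_value_Ioo' zero_le_one hcont ⟨?_, ?_⟩ <;>
    simp [Real.zero_rpow ha.ne', Real.zero_rpow hb.ne', h, hA]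

lemma mul_mul_rpow_lt_of_add_mul_rpow_sub_mul_rpow_eq_zero {a b A B C t : ℝ} (ha : 0 < a)
    (hab : a ≤ b) (hB : 0 ≤ B) (h : A + B - C < 0) (ht : t ∈ Ioo (0 : ℝ) 1)
    (hzero : A + B * t ^ b - C * t ^ a = 0) :
    b * B * t ^ b < a * C * t ^ a := by
  have hY : 0 < 1 - t ^ a := sub_pos.2 (Real.rpow_lt_one ht.1.le ht.2 ha)
  have tangent := mul_rpow_mul_one_sub_rpow_le ha hab ht.1
  have secant : B * (1 - t ^ b) < C * (1 - t ^ a) := by linarith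
  refine lt_of_mul_lt_mul_right ?_ hY.le
  calc b * B * t ^ b * (1 - t ^ a)
      ≤ a * t ^ a * (B * (1 - t ^ b)) := by linarith [mul_le_mul_of_nonneg_left tangent hB]
    _ < a * t ^ a * (C * (1 - t ^ a)) := by
        gcongr
        exact mul_pos ha (Real.rpow_pos_of_pos ht.1 _)
    _ = a * C * t ^ a * (1 - t ^ a) := by ring

theorem stmt_2_general (p q A B C : ℝ) (hq : 2 < q) (hqp : q < p)
    (hA : 0 < A) (hB : 0 < B) (h : A + B - C < 0) :
    ∃ t₀ ∈ Set.Ioo (0 : ℝ) 1,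
      A * t₀ ^ 2 + B * t₀ ^ p - C * t₀ ^ q = 0 ∧
      A * t₀ ^ 2 + (p - 1) * B * t₀ ^ p - (q - 1) * C * t₀ ^ q < 0 := by
  have hq2 : 0 < q - 2 := by linarith
  obtain ⟨t, ht, hzero⟩ :=
    exists_mem_Ioo_add_mul_rpow_sub_mul_rpow_eq_zero hq2 (by linarith : 0 < p - 2) hA h
  have hslope := mul_mul_rpow_lt_of_add_mul_rpow_sub_mul_rpow_eq_zero hq2
    (by linarith : q - 2 ≤ p - 2) hB.le h ht hzero
  have hsplit (e : ℝ) : t ^ e = t ^ 2 * t ^ (e - 2) := by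
    rw [← Real.rpow_two, ← Real.rpow_add ht.1, add_sub_cancel]
  have ht2 : 0 < t ^ 2 := pow_pos ht.1 2
  refine ⟨t, ht, ?_, ?_⟩ <;> rw [hsplit p, hsplit q]
  · linear_combination t ^ 2 * hzero
  · have hneg : A + (p - 1) * B * t ^ (p - 2) - (q - 1) * C * t ^ (q - 2) < 0 := by linarith
    linarith [mul_neg_of_pos_of_neg ht2 hneg]

/-- Scalar content of Proposition 1: if `A + B - C < 0` with `A, B, C > 0` and `2 < q < p`,
then there is `t₀ ∈ (0,1)` with `A t₀² + B t₀^p - C t₀^q = 0` and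
`A t₀² + (p-1) B t₀^p - (q-1) C t₀^q < 0`. -/
theorem stmt_2 (p q A B C : ℝ) (hq : 2 < q) (hqp : q < p)
    (hA : 0 < A) (hB : 0 < B) (hC : 0 < C) (h : A + B - C < 0) :
    ∃ t₀ ∈ Set.Ioo (0 : ℝ) 1,
      A * t₀ ^ 2 + B * t₀ ^ p - C * t₀ ^ q = 0 ∧
      A * t₀ ^ 2 + (p - 1) * B * t₀ ^ p - (q - 1) * C * t₀ ^ q < 0 :=
  stmt_2_general p q A B C hq hqp hA hB h
end

section
/- Let p, q be real numbers with 2 < q < p, let C > 0, let 0 < t₀ < t₁ be real numbers, and set B = C·(t₁^{q−2} − t₀^{q−2})/(t₁^{p−2} − t₀^{p−2}). Then (p−2)·t₀^p·B − (q−2)·t₀^q·C < 0. -/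
open Real

lemma key_bern {x a b : ℝ} (hx : 1 < x) (ha : 0 < a) (hab : a < b) :
    b * (x ^ a - 1) < a * (x ^ b - 1) := by
  have hxpos : (0:ℝ) < x := by linarith
  have hxa : 1 < x ^ a := Real.one_lt_rpow_iff_of_pos hxpos |>.mpr (Or.inl ⟨hx, ha⟩)
  set s : ℝ := x ^ a - 1 with hs
  have hs0 : 0 < s := by linarith
  have hba : 1 < b / a := (one_lt_div ha).mpr hab
  have hbern := one_add_mul_self_lt_rpow_one_add (s := s) (by linarith) (ne_of_gt hs0) hba
  have hrw : (1 + s) ^ (b / a) = x ^ b := by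
    have h1 : (1 + s) = x ^ a := by ring
    rw [h1, ← Real.rpow_mul hxpos.le]
    congr 1
    field_simp
  rw [hrw] at hbern
  have hb : a * (b / a) = b := by field_simp
  nlinarith [hbern, ha, hb]

/-- Concluding computation of Proposition 1: with
`B = C (t₁^{q-2} - t₀^{q-2}) / (t₁^{p-2} - t₀^{p-2})` and `0 < t₀ < t₁`,
one has `(p-2) t₀^p B - (q-2) t₀^q C < 0`. -/
theorem stmt_5 (p q C t₀ t₁ B : ℝ) (hq : 2 < q) (hqp : q < p) (hC : 0 < C)
    (ht₀ : 0 < t₀) (ht : t₀ < t₁)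
    (hB : B = C * (t₁ ^ (q - 2) - t₀ ^ (q - 2)) / (t₁ ^ (p - 2) - t₀ ^ (p - 2))) :
    (p - 2) * t₀ ^ p * B - (q - 2) * t₀ ^ q * C < 0 := by
  have ht₁ : 0 < t₁ := lt_trans ht₀ ht
  have hx : 1 < t₁ / t₀ := (one_lt_div ht₀).mpr ht
  have ha : 0 < q - 2 := by linarith
  have hab : q - 2 < p - 2 := by linarith
  set x := t₁ / t₀ with hxdef
  have key := key_bern hx ha hab
  have hD : 0 < t₁ ^ (p - 2) - t₀ ^ (p - 2) := by
    have := Real.rpow_lt_rpow ht₀.le ht (by linarith : (0:ℝ) < p - 2)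
    linarith
  -- express t₁ ^ e = t₀ ^ e * x ^ e
  have hmul : ∀ e : ℝ, t₁ ^ e = t₀ ^ e * x ^ e := by
    intro e
    rw [← Real.mul_rpow ht₀.le (by positivity : (0:ℝ) ≤ x)]
    congr 1
    rw [hxdef]
    field_simp
  have hp2 : t₀ ^ p = t₀ ^ (p - 2) * t₀ ^ (2:ℝ) := by
    rw [← Real.rpow_add ht₀]; ring_nf
  have hq2 : t₀ ^ q = t₀ ^ (q - 2) * t₀ ^ (2:ℝ) := by
    rw [← Real.rpow_add ht₀]; ring_nf
  have hBval : (p - 2) * t₀ ^ p * B =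
      ((p - 2) * t₀ ^ p * C * (t₁ ^ (q - 2) - t₀ ^ (q - 2))) /
        (t₁ ^ (p - 2) - t₀ ^ (p - 2)) := by
    rw [hB]; ring
  rw [hBval, sub_neg, div_lt_iff₀ hD]
  rw [hmul (q - 2), hmul (p - 2), hp2, hq2]
  have hpos : 0 < C * (t₀ ^ (p - 2) * t₀ ^ (q - 2) * t₀ ^ (2:ℝ)) := by positivity
  nlinarith [mul_lt_mul_of_pos_right key hpos]
end

section
/- Let N ≥ 3 be a natural number, let 0 ≤ s₁ < s₂ < 2, let 2 < q < p be real numbers with q > ((2 − s₂)·p + 2(s₂ − s₁))/(2 − s₁), and let D, E, P, Q be positive real numbers. Then there exist t₀ > 0 and r₀ > 0 such that D·t₀²·r₀^{N−2} + E·t₀²·r₀^N + P·t₀^p·r₀^{N−s₁} − Q·t₀^q·r₀^{N−s₂} = 0 and D·t₀²·r₀^{N−2} + E·t₀²·r₀^N + (p−1)·P·t₀^p·r₀^{N−s₁} − (q−1)·Q·t₀^q·r₀^{N−s₂} = 0. -/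
/-- Scalar core of Proposition 2 (`M⁰ ≠ ∅`): under assumption (21), for any positive
`D, E, P, Q` there exist `t₀, r₀ > 0` solving simultaneously
`D t₀² r₀^{N-2} + E t₀² r₀^N + P t₀^p r₀^{N-s₁} - Q t₀^q r₀^{N-s₂} = 0` and
`D t₀² r₀^{N-2} + E t₀² r₀^N + (p-1) P t₀^p r₀^{N-s₁} - (q-1) Q t₀^q r₀^{N-s₂} = 0`. -/
theorem stmt_7 (N : ℕ) (hN : 3 ≤ N) (s₁ s₂ p q : ℝ)
    (hs₁ : 0 ≤ s₁) (hs₁₂ : s₁ < s₂) (hs₂ : s₂ < 2)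
    (hq : 2 < q) (hqp : q < p)
    (h21 : ((2 - s₂) * p + 2 * (s₂ - s₁)) / (2 - s₁) < q)
    (D E P Q : ℝ) (hD : 0 < D) (hE : 0 < E) (hP : 0 < P) (hQ : 0 < Q) :
    ∃ t₀ > (0 : ℝ), ∃ r₀ > (0 : ℝ),
      D * t₀ ^ 2 * r₀ ^ ((N : ℝ) - 2) + E * t₀ ^ 2 * r₀ ^ (N : ℝ) +
          P * t₀ ^ p * r₀ ^ ((N : ℝ) - s₁) - Q * t₀ ^ q * r₀ ^ ((N : ℝ) - s₂) = 0 ∧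
      D * t₀ ^ 2 * r₀ ^ ((N : ℝ) - 2) + E * t₀ ^ 2 * r₀ ^ (N : ℝ) +
          (p - 1) * P * t₀ ^ p * r₀ ^ ((N : ℝ) - s₁) -
          (q - 1) * Q * t₀ ^ q * r₀ ^ ((N : ℝ) - s₂) = 0 := by
  have hpq : 0 < p - q := by linarith
  have hp2 : 0 < p - 2 := by linarith
  have hq2 : 0 < q - 2 := by linarith
  have hs1lt2 : (0:ℝ) < 2 - s₁ := by linarith
  obtain ⟨δ, hδ⟩ : ∃ x : ℝ, x = (s₁ - s₂) / (p - q) := ⟨_, rfl⟩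
  have hδpq : δ * (p - q) = s₁ - s₂ := by rw [hδ]; field_simp
  obtain ⟨γ, hγ⟩ : ∃ x : ℝ, x = 2 - s₂ + (q - 2) * δ := ⟨_, rfl⟩
  have hγneg : γ < 0 := by
    have h1 : (2 - s₂) * p + 2 * (s₂ - s₁) < q * (2 - s₁) := by
      rw [div_lt_iff₀ hs1lt2] at h21; linarith
    have h2 : γ * (p - q) < 0 := by
      have h3 : γ * (p - q) = (2 - s₂) * (p - q) + (q - 2) * (δ * (p - q)) := by
        rw [hγ]; ring
      rw [h3, hδpq]; nlinarith
    nlinarith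
  -- the scaling constant K
  obtain ⟨K, hK⟩ : ∃ x : ℝ, x = ((q - 2) * Q / ((p - 2) * P)) ^ (1 / (p - q)) := ⟨_, rfl⟩
  have hKbase : 0 < (q - 2) * Q / ((p - 2) * P) := by positivity
  have hKpos : 0 < K := hK ▸ Real.rpow_pos_of_pos hKbase _
  have hKpq : K ^ (p - q) = (q - 2) * Q / ((p - 2) * P) := by
    rw [hK, ← Real.rpow_mul hKbase.le, one_div, inv_mul_cancel₀ hpq.ne', Real.rpow_one]
  obtain ⟨c, hc⟩ : ∃ x : ℝ, x = (p - q) / (p - 2) * Q * K ^ (q - 2) := ⟨_, rfl⟩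
  have hcpos : 0 < c := by
    have := Real.rpow_pos_of_pos hKpos (q - 2)
    rw [hc]; positivity
  -- IVT: find r₀ > 0 with c * r₀ ^ γ = D + E * r₀ ^ 2
  obtain ⟨Kb, hKb⟩ : ∃ x : ℝ, x = (D + E + c) / c := ⟨_, rfl⟩
  have hKb1 : 1 < Kb := by rw [hKb, lt_div_iff₀ hcpos]; linarith
  obtain ⟨a, ha⟩ : ∃ x : ℝ, x = Kb ^ (1 / γ) := ⟨_, rfl⟩
  have hapos : 0 < a := ha ▸ Real.rpow_pos_of_pos (by linarith) _
  have halt1 : a < 1 := ha ▸ Real.rpow_lt_one_of_one_lt_of_neg hKb1 (one_div_neg.mpr hγneg)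
  have haγ : a ^ γ = Kb := by
    rw [ha, ← Real.rpow_mul (by linarith : (0:ℝ) ≤ Kb), one_div,
      inv_mul_cancel₀ (ne_of_lt hγneg), Real.rpow_one]
  have hhapos : 0 < c * a ^ γ - D - E * a ^ 2 := by
    rw [haγ, hKb, mul_div_cancel₀ _ hcpos.ne']
    have ha2 : a ^ 2 < 1 := by nlinarith
    nlinarith
  obtain ⟨b, hb⟩ : ∃ x : ℝ, x = 1 + Real.sqrt (c / E) := ⟨_, rfl⟩
  have hsqnn : 0 ≤ Real.sqrt (c / E) := Real.sqrt_nonneg _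
  have hb1 : 1 ≤ b := by rw [hb]; linarith
  have hbpos : 0 < b := by linarith
  have hbγ : b ^ γ ≤ 1 := Real.rpow_le_one_of_one_le_of_nonpos hb1 hγneg.le
  have hbsq : c / E ≤ b ^ 2 := by
    have h2 : Real.sqrt (c / E) ^ 2 = c / E := Real.sq_sqrt (by positivity)
    have h1 : Real.sqrt (c / E) ≤ b := by rw [hb]; linarith
    calc c / E = Real.sqrt (c / E) ^ 2 := h2.symm
    _ ≤ b ^ 2 := by gcongr
  have hhbneg : c * b ^ γ - D - E * b ^ 2 < 0 := by
    have h1 : c ≤ E * b ^ 2 := by rw [div_le_iff₀ hE] at hbsq; linarith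
    have h2 : c * b ^ γ ≤ c := mul_le_of_le_one_right hcpos.le hbγ
    linarith
  have hab : a ≤ b := by linarith
  have hcont : ContinuousOn (fun r : ℝ => c * r ^ γ - D - E * r ^ 2) (Set.Icc a b) := by
    intro x hx
    have hx0 : x ≠ 0 := ne_of_gt (lt_of_lt_of_le hapos hx.1)
    exact (((continuousAt_const.mul (Real.continuousAt_rpow_const x γ (Or.inl hx0))).sub
      continuousAt_const).sub (continuousAt_const.mul (continuousAt_id.pow 2))).continuousWithinAt
  have hmem : (0:ℝ) ∈ Set.Icc (c * b ^ γ - D - E * b ^ 2) (c * a ^ γ - D - E * a ^ 2) :=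
    ⟨hhbneg.le, hhapos.le⟩
  obtain ⟨r₀, hr₀mem, hr₀eq⟩ := intermediate_value_Icc' hab hcont hmem
  have hr₀pos : 0 < r₀ := lt_of_lt_of_le hapos hr₀mem.1
  have hroot : c * r₀ ^ γ = D + E * r₀ ^ 2 := by
    have h0 : c * r₀ ^ γ - D - E * r₀ ^ 2 = 0 := hr₀eq
    linarith
  -- the solution
  obtain ⟨t₀, ht₀⟩ : ∃ x : ℝ, x = K * r₀ ^ δ := ⟨_, rfl⟩
  have hrδpos : 0 < r₀ ^ δ := Real.rpow_pos_of_pos hr₀pos δ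
  have ht₀pos : 0 < t₀ := by rw [ht₀]; positivity
  have hT : ∀ x : ℝ, t₀ ^ x = K ^ x * r₀ ^ (δ * x) := by
    intro x
    rw [ht₀, Real.mul_rpow hKpos.le hrδpos.le, ← Real.rpow_mul hr₀pos.le]
  have ht2 : t₀ ^ (2:ℕ) = K ^ (2:ℝ) * r₀ ^ (δ * 2) := by
    rw [← Real.rpow_natCast t₀ 2, hT]
    norm_num
  -- key identity (E1): (p-2) X = (q-2) Y
  have hKe : (p - 2) * P * K ^ p = (q - 2) * Q * K ^ q := by
    have h1 : K ^ p = K ^ q * K ^ (p - q) := by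
      rw [← Real.rpow_add hKpos]; ring_nf
    rw [h1, hKpq]
    field_simp
  have hrpow1 : r₀ ^ (δ * p) * r₀ ^ ((N:ℝ) - s₁) = r₀ ^ (δ * q) * r₀ ^ ((N:ℝ) - s₂) := by
    rw [← Real.rpow_add hr₀pos, ← Real.rpow_add hr₀pos]
    congr 1
    linear_combination hδpq
  have e1 : (p - 2) * (P * t₀ ^ p * r₀ ^ ((N:ℝ) - s₁)) =
      (q - 2) * (Q * t₀ ^ q * r₀ ^ ((N:ℝ) - s₂)) := by
    rw [hT p, hT q]
    linear_combination (r₀ ^ (δ * p) * r₀ ^ ((N:ℝ) - s₁)) * hKe +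
      ((q - 2) * Q * K ^ q) * hrpow1
  -- key identity (E2): (p-2) Z = (p-q) Y
  have hbexp : r₀ ^ (δ * 2 + (N:ℝ)) = r₀ ^ (2:ℝ) * r₀ ^ (δ * 2 + ((N:ℝ) - 2)) := by
    rw [← Real.rpow_add hr₀pos]
    congr 1
    ring
  have hgexp : r₀ ^ (δ * q + ((N:ℝ) - s₂)) = r₀ ^ γ * r₀ ^ (δ * 2 + ((N:ℝ) - 2)) := by
    rw [← Real.rpow_add hr₀pos]
    congr 1
    rw [hγ]; ring
  have hr2 : r₀ ^ (2:ℕ) = r₀ ^ (2:ℝ) := by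
    rw [← Real.rpow_natCast r₀ 2]; norm_num
  have hmul : D * r₀ ^ (δ * 2 + ((N:ℝ) - 2)) + E * r₀ ^ (δ * 2 + (N:ℝ)) =
      c * r₀ ^ (δ * q + ((N:ℝ) - s₂)) := by
    rw [hbexp, hgexp, ← hr2]
    linear_combination (-(r₀ ^ (δ * 2 + ((N:ℝ) - 2)))) * hroot
  have hKc : (p - 2) * K ^ (2:ℝ) * c = (p - q) * Q * K ^ q := by
    have h1 : K ^ (2:ℝ) * K ^ (q - 2) = K ^ q := by
      rw [← Real.rpow_add hKpos]; ring_nf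
    have h2 : (p - 2) * ((p - q) / (p - 2)) = p - q := by field_simp
    rw [hc]
    calc (p - 2) * K ^ (2:ℝ) * ((p - q) / (p - 2) * Q * K ^ (q - 2))
        = (p - 2) * ((p - q) / (p - 2)) * Q * (K ^ (2:ℝ) * K ^ (q - 2)) := by ring
      _ = (p - q) * Q * K ^ q := by rw [h2, h1]
  have e2 : (p - 2) * (D * t₀ ^ 2 * r₀ ^ ((N:ℝ) - 2) + E * t₀ ^ 2 * r₀ ^ (N:ℝ)) =
      (p - q) * (Q * t₀ ^ q * r₀ ^ ((N:ℝ) - s₂)) := by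
    rw [ht2, hT q]
    have lhs_eq : (p - 2) * (D * (K ^ (2:ℝ) * r₀ ^ (δ * 2)) * r₀ ^ ((N:ℝ) - 2) +
        E * (K ^ (2:ℝ) * r₀ ^ (δ * 2)) * r₀ ^ (N:ℝ)) =
        (p - 2) * K ^ (2:ℝ) * (D * r₀ ^ (δ * 2 + ((N:ℝ) - 2)) + E * r₀ ^ (δ * 2 + (N:ℝ))) := by
      rw [Real.rpow_add hr₀pos, Real.rpow_add hr₀pos]
      ring
    rw [lhs_eq, hmul, Real.rpow_add hr₀pos]
    linear_combination (r₀ ^ (δ * q) * r₀ ^ ((N:ℝ) - s₂)) * hKc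
  refine ⟨t₀, ht₀pos, r₀, hr₀pos, ?_, ?_⟩
  · have hzero : (p - 2) * (D * t₀ ^ 2 * r₀ ^ ((N:ℝ) - 2) + E * t₀ ^ 2 * r₀ ^ (N:ℝ) +
        P * t₀ ^ p * r₀ ^ ((N:ℝ) - s₁) - Q * t₀ ^ q * r₀ ^ ((N:ℝ) - s₂)) = 0 := by
      linear_combination e2 + e1
    exact (mul_eq_zero.mp hzero).resolve_left hp2.ne'
  · have hzero : (p - 2) * (D * t₀ ^ 2 * r₀ ^ ((N:ℝ) - 2) + E * t₀ ^ 2 * r₀ ^ (N:ℝ) +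
        (p - 1) * P * t₀ ^ p * r₀ ^ ((N:ℝ) - s₁) -
        (q - 1) * Q * t₀ ^ q * r₀ ^ ((N:ℝ) - s₂)) = 0 := by
      linear_combination e2 + (p - 1) * e1
    exact (mul_eq_zero.mp hzero).resolve_left hp2.ne'
end

section
/- Let N ≥ 3 be a natural number, let 0 ≤ s₁ < s₂ < 2, let 2 < q < p be real numbers with q > ((2 − s₂)·p + 2(s₂ − s₁))/(2 − s₁), and let λ > 0. Let u : ℝ^N → ℝ be a differentiable function such that 0 < ∫_{ℝ^N} ‖∇u(x)‖² dx < ∞, 0 < ∫_{ℝ^N} |u(x)|² dx < ∞, 0 < ∫_{ℝ^N} ‖x‖^{−s₁}|u(x)|^p dx < ∞, and 0 < ∫_{ℝ^N} ‖x‖^{−s₂}|u(x)|^q dx < ∞. Then there exist t₀ > 0 and r₀ > 0 such that the function v(x) = t₀·u(r₀⁻¹x) satisfies both ∫‖∇v‖² + ∫v² + λ∫‖x‖^{−s₁}|v|^p − ∫‖x‖^{−s₂}|v|^q = 0 and ∫‖∇v‖² + ∫v² + (p−1)λ∫‖x‖^{−s₁}|v|^p − (q−1)∫‖x‖^{−s₂}|v|^q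 = 0. -/
open MeasureTheory


private lemma stmt18_alg (Nr s₁ s₂ p q lam D E P Q : ℝ)
    (hD : 0 < D) (hE : 0 < E) (hP : 0 < P) (hQ : 0 < Q) (hlam : 0 < lam)
    (hq2 : 2 < q) (hqp : q < p)
    (ha : 0 < s₁ + (s₂ - s₁) * (p - 2) / (p - q) - 2) :
    ∃ T > (0:ℝ), ∃ R > (0:ℝ),
      T ^ (2:ℝ) * R ^ (Nr - 2) * D + T ^ (2:ℝ) * R ^ Nr * E
        + lam * (T ^ p * R ^ (Nr - s₁) * P) - T ^ q * R ^ (Nr - s₂) * Q = 0 ∧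
      T ^ (2:ℝ) * R ^ (Nr - 2) * D + T ^ (2:ℝ) * R ^ Nr * E
        + (p - 1) * lam * (T ^ p * R ^ (Nr - s₁) * P)
        - (q - 1) * (T ^ q * R ^ (Nr - s₂) * Q) = 0 := by
  have hpq : (0:ℝ) < p - q := by linarith
  have hq2' : (0:ℝ) < q - 2 := by linarith
  have hp2 : (0:ℝ) < p - 2 := by linarith
  set α : ℝ := (s₂ - s₁) * (p - 2) / (p - q) with hα
  set a : ℝ := s₁ + α - 2 with hadef
  have ha' : 0 < a := ha
  set b : ℝ := s₁ + α with hbdef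
  have hb : 0 < b := by simp only [hbdef]; simp only [hadef] at ha'; linarith
  set L : ℝ := Real.log ((q - 2) * Q / ((p - 2) * lam * P)) with hL
  have hexpL : Real.exp L = (q - 2) * Q / ((p - 2) * lam * P) := by
    rw [hL]; exact Real.exp_log (by positivity)
  set κ : ℝ := Real.exp ((p - 2) / (p - q) * L) with hκ
  have hκpos : 0 < κ := Real.exp_pos _
  set c : ℝ := (p - q) / (q - 2) * lam * P * κ with hc
  have hcpos : 0 < c := by
    have h1 : 0 < (p - q) / (q - 2) := div_pos hpq hq2'
    rw [hc]; positivity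
  -- find θ with D exp(aθ) + E exp(bθ) = c
  obtain ⟨θ, hθ⟩ : ∃ θ : ℝ, D * Real.exp (a * θ) + E * Real.exp (b * θ) = c := by
    set f : ℝ → ℝ := fun θ => D * Real.exp (a * θ) + E * Real.exp (b * θ) with hf
    have hcont : Continuous f := by fun_prop
    set θ₁ : ℝ := min (Real.log (c / (2 * D)) / a) (Real.log (c / (2 * E)) / b) with hθ₁
    set θ₂ : ℝ := max θ₁ (Real.log (c / D) / a) with hθ₂
    have h12 : θ₁ ≤ θ₂ := le_max_left _ _
    have hf1 : f θ₁ ≤ c := by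
      have h1 : a * θ₁ ≤ Real.log (c / (2 * D)) := by
        have h := min_le_left (Real.log (c / (2 * D)) / a) (Real.log (c / (2 * E)) / b)
        have := mul_le_mul_of_nonneg_left h ha'.le
        calc a * θ₁ ≤ a * (Real.log (c / (2 * D)) / a) := this
          _ = Real.log (c / (2 * D)) := by field_simp
      have h2 : b * θ₁ ≤ Real.log (c / (2 * E)) := by
        have h := min_le_right (Real.log (c / (2 * D)) / a) (Real.log (c / (2 * E)) / b)
        have := mul_le_mul_of_nonneg_left h hb.le
        calc b * θ₁ ≤ b * (Real.log (c / (2 * E)) / b) := this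
          _ = Real.log (c / (2 * E)) := by field_simp
      have e1 : Real.exp (a * θ₁) ≤ c / (2 * D) := by
        rw [← Real.exp_log (show (0:ℝ) < c / (2 * D) by positivity)]
        exact Real.exp_le_exp.2 h1
      have e2 : Real.exp (b * θ₁) ≤ c / (2 * E) := by
        rw [← Real.exp_log (show (0:ℝ) < c / (2 * E) by positivity)]
        exact Real.exp_le_exp.2 h2
      have d1 : D * Real.exp (a * θ₁) ≤ c / 2 := by
        have := mul_le_mul_of_nonneg_left e1 hD.le
        have hDe : D * (c / (2 * D)) = c / 2 := by field_simp
        linarith [hDe ▸ this]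
      have d2 : E * Real.exp (b * θ₁) ≤ c / 2 := by
        have := mul_le_mul_of_nonneg_left e2 hE.le
        have hEe : E * (c / (2 * E)) = c / 2 := by field_simp
        linarith [hEe ▸ this]
      simp only [hf]; linarith
    have hf2 : c ≤ f θ₂ := by
      have h1 : Real.log (c / D) ≤ a * θ₂ := by
        have h := le_max_right θ₁ (Real.log (c / D) / a)
        have := mul_le_mul_of_nonneg_left h ha'.le
        calc Real.log (c / D) = a * (Real.log (c / D) / a) := by field_simp
          _ ≤ a * θ₂ := this
      have e1 : c / D ≤ Real.exp (a * θ₂) := by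
        rw [← Real.exp_log (show (0:ℝ) < c / D by positivity)]
        exact Real.exp_le_exp.2 h1
      have d1 : c ≤ D * Real.exp (a * θ₂) := by
        have := mul_le_mul_of_nonneg_left e1 hD.le
        have hDe : D * (c / D) = c := by field_simp
        linarith [hDe ▸ this]
      have : 0 < E * Real.exp (b * θ₂) := by positivity
      simp only [hf]; linarith
    have := intermediate_value_Icc h12 hcont.continuousOn
    obtain ⟨θ, _, hθ⟩ := this ⟨hf1, hf2⟩
    exact ⟨θ, hθ⟩
  set τ : ℝ := 1 / (p - q) * L + (s₁ - s₂) / (p - q) * θ with hτ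
  set S : ℝ := τ * 2 + θ * (Nr - s₁ - α) with hS
  have I1 : τ * 2 + θ * (Nr - 2) = a * θ + S := by
    simp only [hS, hadef]; ring
  have I2 : τ * 2 + θ * Nr = b * θ + S := by
    simp only [hS, hbdef]; ring
  have I3 : τ * p + θ * (Nr - s₁) = S + (p - 2) / (p - q) * L := by
    simp only [hS, hτ, hα]; field_simp; try ring
  have I4 : τ * q + θ * (Nr - s₂) = S + (q - 2) / (p - q) * L := by
    simp only [hS, hτ, hα]; field_simp; try ring
  -- cleared-denominator facts
  have hθ' : (q - 2) * (D * Real.exp (a * θ) + E * Real.exp (b * θ))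
      = (p - q) * lam * P * Real.exp ((p - 2) / (p - q) * L) := by
    rw [hθ, hc, hκ]; field_simp; try ring
  have hQκ : (q - 2) * (Q * Real.exp ((q - 2) / (p - q) * L))
      = (p - 2) * lam * P * Real.exp ((p - 2) / (p - q) * L) := by
    have h5 : Real.exp L * Real.exp ((q - 2) / (p - q) * L)
        = Real.exp ((p - 2) / (p - q) * L) := by
      rw [← Real.exp_add]; congr 1; field_simp; ring
    have h6 : (q - 2) * Q = (p - 2) * lam * P * Real.exp L := by
      rw [hexpL]; field_simp
    linear_combination Real.exp ((q - 2) / (p - q) * L) * h6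
      + (p - 2) * lam * P * h5
  refine ⟨Real.exp τ, Real.exp_pos τ, Real.exp θ, Real.exp_pos θ, ?_, ?_⟩
  · simp only [← Real.exp_mul, ← Real.exp_add]
    rw [I1, I2, I3, I4]
    simp only [Real.exp_add]
    refine mul_left_cancel₀ (show (q:ℝ) - 2 ≠ 0 by linarith) ?_
    rw [mul_zero]
    linear_combination Real.exp S * hθ' - Real.exp S * hQκ
  · simp only [← Real.exp_mul, ← Real.exp_add]
    rw [I1, I2, I3, I4]
    simp only [Real.exp_add]
    refine mul_left_cancel₀ (show (q:ℝ) - 2 ≠ 0 by linarith) ?_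
    rw [mul_zero]
    linear_combination Real.exp S * hθ' - (q - 1) * Real.exp S * hQκ


private lemma stmt18_scale_weighted (N : ℕ) (u : EuclideanSpace ℝ (Fin N) → ℝ)
    (s m t r : ℝ) (ht : 0 < t) (hr : 0 < r) :
    (∫ x : EuclideanSpace ℝ (Fin N), ‖x‖ ^ (-s) * |t * u (r⁻¹ • x)| ^ m)
      = t ^ m * r ^ ((N:ℝ) - s) *
        ∫ x : EuclideanSpace ℝ (Fin N), ‖x‖ ^ (-s) * |u x| ^ m := by
  have key : ∀ x : EuclideanSpace ℝ (Fin N),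
      ‖x‖ ^ (-s) * |t * u (r⁻¹ • x)| ^ m
        = (t ^ m * r ^ (-s)) * ((fun y => ‖y‖ ^ (-s) * |u y| ^ m) (r⁻¹ • x)) := by
    intro x
    have hx : ‖x‖ = r * ‖r⁻¹ • x‖ := by
      rw [norm_smul, norm_inv, Real.norm_eq_abs, abs_of_pos hr]
      field_simp
    rw [hx, Real.mul_rpow hr.le (norm_nonneg _), abs_mul,
      Real.mul_rpow (abs_nonneg t) (abs_nonneg _), abs_of_pos ht]
    ring
  rw [integral_congr_ae (Filter.Eventually.of_forall key), integral_const_mul,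
    Measure.integral_comp_inv_smul_of_nonneg volume
      (fun y : EuclideanSpace ℝ (Fin N) => ‖y‖ ^ (-s) * |u y| ^ m) hr.le,
    finrank_euclideanSpace_fin, smul_eq_mul]
  rw [show ((N:ℝ) - s) = (N:ℝ) + (-s) by ring, Real.rpow_add hr, Real.rpow_natCast]
  ring

private lemma stmt18_scale_mass (N : ℕ) (u : EuclideanSpace ℝ (Fin N) → ℝ)
    (t r : ℝ) (ht : 0 < t) (hr : 0 < r) :
    (∫ x : EuclideanSpace ℝ (Fin N), (t * u (r⁻¹ • x)) ^ 2)
      = t ^ (2:ℝ) * r ^ (N:ℝ) * ∫ x : EuclideanSpace ℝ (Fin N), |u x| ^ 2 := by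
  have key : ∀ x : EuclideanSpace ℝ (Fin N),
      (t * u (r⁻¹ • x)) ^ 2 = t ^ 2 * ((fun y => |u y| ^ 2) (r⁻¹ • x)) := by
    intro x
    simp only [sq_abs]
    ring
  rw [integral_congr_ae (Filter.Eventually.of_forall key), integral_const_mul,
    Measure.integral_comp_inv_smul_of_nonneg volume
      (fun y : EuclideanSpace ℝ (Fin N) => |u y| ^ 2) hr.le,
    finrank_euclideanSpace_fin, smul_eq_mul, Real.rpow_two, Real.rpow_natCast]
  ring

private lemma stmt18_scale_grad (N : ℕ) (u : EuclideanSpace ℝ (Fin N) → ℝ)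
    (hu : Differentiable ℝ u) (t r : ℝ) (ht : 0 < t) (hr : 0 < r) :
    (∫ x, ‖fderiv ℝ (fun y : EuclideanSpace ℝ (Fin N) => t * u (r⁻¹ • y)) x‖ ^ 2)
      = t ^ (2:ℝ) * r ^ ((N:ℝ) - 2) * ∫ x, ‖fderiv ℝ u x‖ ^ 2 := by
  have hgrad : ∀ x : EuclideanSpace ℝ (Fin N),
      fderiv ℝ (fun y : EuclideanSpace ℝ (Fin N) => t * u (r⁻¹ • y)) x
        = (t * r⁻¹) • fderiv ℝ u (r⁻¹ • x) := by
    intro x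
    have h1 : HasFDerivAt (fun y : EuclideanSpace ℝ (Fin N) => r⁻¹ • y)
        ((r⁻¹ : ℝ) • ContinuousLinearMap.id ℝ (EuclideanSpace ℝ (Fin N))) x :=
      (hasFDerivAt_id x).const_smul r⁻¹
    have h2 : HasFDerivAt u (fderiv ℝ u (r⁻¹ • x)) (r⁻¹ • x) := (hu _).hasFDerivAt
    have h3 := (h2.comp x h1).const_mul t
    have h4 : t • ((fderiv ℝ u (r⁻¹ • x)).comp
        ((r⁻¹ : ℝ) • ContinuousLinearMap.id ℝ (EuclideanSpace ℝ (Fin N))))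
        = (t * r⁻¹) • fderiv ℝ u (r⁻¹ • x) := by
      ext v
      simp [mul_assoc, _root_.map_smul, smul_eq_mul]
    rw [← h4]
    exact h3.fderiv
  have key : ∀ x : EuclideanSpace ℝ (Fin N),
      ‖fderiv ℝ (fun y : EuclideanSpace ℝ (Fin N) => t * u (r⁻¹ • y)) x‖ ^ 2
        = (t * r⁻¹) ^ 2 * ((fun y => ‖fderiv ℝ u y‖ ^ 2) (r⁻¹ • x)) := by
    intro x
    rw [hgrad x, norm_smul, Real.norm_eq_abs, mul_pow, sq_abs]
  rw [integral_congr_ae (Filter.Eventually.of_forall key), integral_const_mul,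
    Measure.integral_comp_inv_smul_of_nonneg volume
      (fun y : EuclideanSpace ℝ (Fin N) => ‖fderiv ℝ u y‖ ^ 2) hr.le,
    finrank_euclideanSpace_fin, smul_eq_mul]
  have h5 : r ^ ((N:ℝ) - 2) = r ^ (N:ℕ) / r ^ 2 := by
    rw [show ((N:ℝ) - 2) = (N:ℝ) + (-2:ℝ) by ring, Real.rpow_add hr, Real.rpow_natCast,
      show (-2:ℝ) = -(2:ℝ) by ring, Real.rpow_neg hr.le, Real.rpow_two]
    ring
  rw [h5, Real.rpow_two]
  field_simp


/-- Proposition 2 of the paper (`M⁰ ≠ ∅`): under assumption (21), for a differentiable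
`u : ℝ^N → ℝ` whose Dirichlet, mass and weighted `p`-, `q`-integrals are positive and finite,
there exist `t₀, r₀ > 0` such that `v(x) = t₀ u(r₀⁻¹ x)` satisfies both `φ(v) = 0` and
`ψ(v) = 0`. -/
theorem stmt_18 (N : ℕ) (hN : 3 ≤ N) (s₁ s₂ p q lam : ℝ)
    (hs₁ : 0 ≤ s₁) (hs₁₂ : s₁ < s₂) (hs₂ : s₂ < 2)
    (hq : 2 < q) (hqp : q < p)
    (h21 : ((2 - s₂) * p + 2 * (s₂ - s₁)) / (2 - s₁) < q)
    (hlam : 0 < lam)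
    (u : EuclideanSpace ℝ (Fin N) → ℝ) (hu : Differentiable ℝ u)
    (hDint : Integrable (fun x => ‖fderiv ℝ u x‖ ^ 2))
    (hDpos : 0 < ∫ x, ‖fderiv ℝ u x‖ ^ 2)
    (hEint : Integrable (fun x => |u x| ^ 2))
    (hEpos : 0 < ∫ x, |u x| ^ 2)
    (hPint : Integrable (fun x => ‖x‖ ^ (-s₁) * |u x| ^ p))
    (hPpos : 0 < ∫ x, ‖x‖ ^ (-s₁) * |u x| ^ p)
    (hQint : Integrable (fun x => ‖x‖ ^ (-s₂) * |u x| ^ q))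
    (hQpos : 0 < ∫ x, ‖x‖ ^ (-s₂) * |u x| ^ q) :
    ∃ t₀ > (0 : ℝ), ∃ r₀ > (0 : ℝ),
      (∫ x, ‖fderiv ℝ (fun y : EuclideanSpace ℝ (Fin N) => t₀ * u (r₀⁻¹ • y)) x‖ ^ 2) +
          (∫ x : EuclideanSpace ℝ (Fin N), (t₀ * u (r₀⁻¹ • x)) ^ 2) +
          lam * (∫ x : EuclideanSpace ℝ (Fin N), ‖x‖ ^ (-s₁) * |t₀ * u (r₀⁻¹ • x)| ^ p) -
          (∫ x : EuclideanSpace ℝ (Fin N), ‖x‖ ^ (-s₂) * |t₀ * u (r₀⁻¹ • x)| ^ q) = 0 ∧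
      (∫ x, ‖fderiv ℝ (fun y : EuclideanSpace ℝ (Fin N) => t₀ * u (r₀⁻¹ • y)) x‖ ^ 2) +
          (∫ x : EuclideanSpace ℝ (Fin N), (t₀ * u (r₀⁻¹ • x)) ^ 2) +
          (p - 1) * lam *
            (∫ x : EuclideanSpace ℝ (Fin N), ‖x‖ ^ (-s₁) * |t₀ * u (r₀⁻¹ • x)| ^ p) -
          (q - 1) * (∫ x : EuclideanSpace ℝ (Fin N), ‖x‖ ^ (-s₂) * |t₀ * u (r₀⁻¹ • x)| ^ q) = 0 := by
  have hpq : (0:ℝ) < p - q := by linarith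
  have h21' := (div_lt_iff₀ (show (0:ℝ) < 2 - s₁ by linarith)).mp h21
  have ha : 0 < s₁ + (s₂ - s₁) * (p - 2) / (p - q) - 2 := by
    have expand : (s₂ - s₁) * (p - 2) - (2 - s₁) * (p - q)
        = q * (2 - s₁) - ((2 - s₂) * p + 2 * (s₂ - s₁)) := by ring
    have hkey : (2 - s₁) * (p - q) < (s₂ - s₁) * (p - 2) := by linarith
    have hrw : s₁ + (s₂ - s₁) * (p - 2) / (p - q) - 2
        = ((s₂ - s₁) * (p - 2) - (2 - s₁) * (p - q)) / (p - q) := by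
      field_simp; ring
    rw [hrw]
    exact div_pos (by linarith) hpq
  obtain ⟨T, hT, R, hR, h1, h2⟩ := stmt18_alg (N:ℝ) s₁ s₂ p q lam
    (∫ x, ‖fderiv ℝ u x‖ ^ 2) (∫ x, |u x| ^ 2)
    (∫ x, ‖x‖ ^ (-s₁) * |u x| ^ p) (∫ x, ‖x‖ ^ (-s₂) * |u x| ^ q)
    hDpos hEpos hPpos hQpos hlam hq hqp ha
  refine ⟨T, hT, R, hR, ?_, ?_⟩
  · rw [stmt18_scale_grad N u hu T R hT hR, stmt18_scale_mass N u T R hT hR,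
      stmt18_scale_weighted N u s₁ p T R hT hR, stmt18_scale_weighted N u s₂ q T R hT hR]
    linear_combination h1
  · rw [stmt18_scale_grad N u hu T R hT hR, stmt18_scale_mass N u T R hT hR,
      stmt18_scale_weighted N u s₁ p T R hT hR, stmt18_scale_weighted N u s₂ q T R hT hR]
    linear_combination h2
end
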